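/- For c > 0, λ > 0, the function p(x,t) = (λ/(2c)) · I₀((λ/c)√(c²t² - x²)) / sinh(λt) satisfies the telegraph-type equation ∂²p/∂t² + 2λ·coth(λt)·∂p/∂t = c²∂²p/∂x² on {(x,t): t>0, |x|<ct}, and ∫_{-ct}^{ct} p(x,t) dx = 1. -/

import Mathlib

/-!
Write `G u = ∑ uᵏ / (k!)²`, so that `I₀ z = G (z² / 4)` and `u G'' + G' = G`. Then
`w x t = G (a (c²t² - x²))` solves the Klein–Gordon equation `w_tt - c² w_xx = 4 a c² w`, which
for `a = (λ / 2c)²` reads `w_tt - c² w_xx = λ² w`. Dividing by `sinh (λ t)`, whose second derivative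
is `λ² sinh (λ t)`, turns it into the telegraph equation with drift `2 λ coth (λ t)`.

For the normalisation, integrate the series term by term:
`∫_{-R}^{R} (R² - x²)ᵏ dx = 2^(2k+1) (k!)² R^(2k+1) / (2k+1)!`, and the resulting series is that of
`2 sinh (β R) / β`.
-/

open Real MeasureTheory

/-- Modified Bessel function of the first kind of order 0. -/
noncomputable def besselI0 (z : ℝ) : ℝ :=
  ∑' k : ℕ, (z / 2) ^ (2 * k) / ((Nat.factorial k : ℝ)) ^ 2

open Filter Topology
open scoped Nat ContDiff

def IsEntireCoeff (d : ℕ → ℝ) : Prop := ∀ r : ℝ, Summable fun k => ‖d k * r ^ k‖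

noncomputable def entireSum (d : ℕ → ℝ) (u : ℝ) : ℝ := ∑' k, d k * u ^ k

def derivCoeff (d : ℕ → ℝ) (k : ℕ) : ℝ := (k + 1) * d (k + 1)

namespace IsEntireCoeff

variable {d : ℕ → ℝ}

theorem summable (hd : IsEntireCoeff d) (u : ℝ) : Summable fun k => d k * u ^ k :=
  (hd u).of_norm

theorem summable_natCast_mul (hd : IsEntireCoeff d) (r : ℝ) :
    Summable fun k : ℕ => (k : ℝ) * ‖d k * r ^ k‖ := by
  refine (hd (2 * r)).of_nonneg_of_le (fun k => by positivity) fun k => ?_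
  have hk : (k : ℝ) ≤ 2 ^ k := by exact_mod_cast Nat.lt_two_pow_self.le
  calc (k : ℝ) * ‖d k * r ^ k‖ ≤ 2 ^ k * ‖d k * r ^ k‖ := by gcongr
    _ = ‖d k * (2 * r) ^ k‖ := by
      rw [mul_pow, mul_left_comm, norm_mul (2 ^ k), norm_pow, Real.norm_two]

theorem derivCoeff (hd : IsEntireCoeff d) : IsEntireCoeff (derivCoeff d) := by
  intro r
  have hshift := (summable_nat_add_iff 1).2 (hd.summable_natCast_mul (|r| + 1))
  refine hshift.of_nonneg_of_le (fun k => by positivity) fun k => ?_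
  have hr : |r| ^ k ≤ (|r| + 1) ^ (k + 1) :=
    (pow_le_pow_left₀ (abs_nonneg r) (by linarith) k).trans
      (pow_le_pow_right₀ (by linarith [abs_nonneg r]) k.le_succ)
  simp only [_root_.derivCoeff, norm_mul, norm_pow, Real.norm_eq_abs, Nat.cast_succ]
  rw [abs_of_nonneg (by positivity : (0 : ℝ) ≤ k + 1), abs_of_nonneg (by positivity : 0 ≤ |r| + 1),
    mul_assoc]
  gcongr

theorem hasDerivAt_entireSum (hd : IsEntireCoeff d) (u : ℝ) :
    HasDerivAt (entireSum d) (entireSum (_root_.derivCoeff d) u) u := by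
  set R := |u| + 1
  have hR : 1 ≤ R := by linarith [abs_nonneg u]
  have hbound : ∀ k, ∀ y ∈ Metric.ball (0 : ℝ) R,
      ‖d k * (k * y ^ (k - 1))‖ ≤ k * ‖d k * R ^ k‖ := by
    intro k y hy
    have hy : |y| ≤ R := by simpa using (Metric.mem_ball.1 hy).le
    have : |y| ^ (k - 1) ≤ R ^ k :=
      (pow_le_pow_left₀ (abs_nonneg y) hy _).trans (pow_le_pow_right₀ hR (Nat.sub_le k 1))
    simp only [norm_mul, norm_pow, Real.norm_eq_abs, Nat.abs_cast,
      abs_of_nonneg (by linarith : (0 : ℝ) ≤ R)]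
    rw [mul_left_comm (k : ℝ)]
    gcongr
  have hderiv := hasDerivAt_tsum_of_isPreconnected (hd.summable_natCast_mul R)
    Metric.isOpen_ball (convex_ball 0 R).isPreconnected
    (fun (k : ℕ) y _ => (hasDerivAt_pow k y).const_mul (d k)) hbound
    (Metric.mem_ball_self (by linarith)) (hd.summable 0) (show u ∈ Metric.ball 0 R by simp [R])
  have hsum : Summable fun k : ℕ => d k * (k * u ^ (k - 1)) :=
    .of_norm_bounded (hd.summable_natCast_mul R) fun k => hbound k u (by simp [R])
  have hvalue : ∑' k : ℕ, d k * (k * u ^ (k - 1)) = entireSum (_root_.derivCoeff d) u := by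
    rw [hsum.tsum_eq_zero_add, entireSum]
    simp only [CharP.cast_eq_zero, zero_mul, mul_zero, zero_add, Nat.add_sub_cancel,
      _root_.derivCoeff, Nat.cast_succ]
    congr 1 with k
    ring
  rw [← hvalue]
  exact hderiv

theorem mul_entireSum_derivCoeff (hd : IsEntireCoeff d) (u : ℝ) :
    u * entireSum (_root_.derivCoeff d) u = ∑' k, k * d k * u ^ k := by
  have hsum : Summable fun k : ℕ => k * d k * u ^ k :=
    .of_norm_bounded (hd.summable_natCast_mul u) fun k => by simp [mul_assoc]
  rw [hsum.tsum_eq_zero_add, entireSum, ← tsum_mul_left]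
  simp only [CharP.cast_eq_zero, zero_mul, zero_add, _root_.derivCoeff, Nat.cast_succ]
  congr 1 with k
  ring

theorem contDiff_entireSum (hd : IsEntireCoeff d) : ContDiff ℝ ∞ (entireSum d) := by
  refine contDiff_infty.2 fun n => ?_
  induction n generalizing d with
  | zero =>
    exact contDiff_zero.2 (continuous_iff_continuousAt.2 fun u =>
      (hd.hasDerivAt_entireSum u).continuousAt)
  | succ n ih =>
    rw [Nat.cast_succ, contDiff_succ_iff_deriv]
    refine ⟨fun u => (hd.hasDerivAt_entireSum u).differentiableAt, by simp, ?_⟩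
    rw [funext fun u => (hd.hasDerivAt_entireSum u).deriv]
    exact ih hd.derivCoeff

end IsEntireCoeff

noncomputable def besselCoeff (k : ℕ) : ℝ := ((k ! : ℝ) ^ 2)⁻¹

theorem isEntireCoeff_besselCoeff : IsEntireCoeff besselCoeff := by
  intro r
  refine (Real.summable_pow_div_factorial |r|).of_nonneg_of_le (fun k => by positivity)
    fun k => ?_
  have hk : (1 : ℝ) ≤ k ! := by exact_mod_cast k.factorial_pos
  rw [besselCoeff, norm_mul, norm_inv, norm_pow, norm_pow, Real.norm_natCast, Real.norm_eq_abs,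
    inv_mul_eq_div]
  gcongr
  nlinarith

theorem add_one_mul_derivCoeff_besselCoeff (k : ℕ) :
    (k + 1) * derivCoeff besselCoeff k = besselCoeff k := by
  have : (k ! : ℝ) ≠ 0 := by positivity
  simp only [derivCoeff, besselCoeff, Nat.factorial_succ, Nat.cast_mul, Nat.cast_succ]
  field_simp

theorem besselI0_eq_entireSum (z : ℝ) : besselI0 z = entireSum besselCoeff ((z / 2) ^ 2) := by
  simp only [besselI0, entireSum, besselCoeff, pow_mul, inv_mul_eq_div]

theorem besselI0_mul_sqrt {s : ℝ} (hs : 0 ≤ s) (β : ℝ) :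
    besselI0 (β * √s) = entireSum besselCoeff ((β / 2) ^ 2 * s) := by
  rw [besselI0_eq_entireSum, div_pow, mul_pow, Real.sq_sqrt hs, div_pow, mul_div_right_comm]

theorem entireSum_besselCoeff_ode (u : ℝ) :
    u * entireSum (derivCoeff (derivCoeff besselCoeff)) u + entireSum (derivCoeff besselCoeff) u =
      entireSum besselCoeff u := by
  have he := isEntireCoeff_besselCoeff.derivCoeff
  have hsum : Summable fun k : ℕ => k * derivCoeff besselCoeff k * u ^ k :=
    .of_norm_bounded (he.summable_natCast_mul u) fun k => by simp [mul_assoc]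
  rw [he.mul_entireSum_derivCoeff, entireSum, ← hsum.tsum_add (he.summable u), entireSum]
  congr 1 with k
  rw [← add_one_mul_derivCoeff_besselCoeff]
  ring

theorem mul_integral_sq_sub_sq_pow_succ (R : ℝ) (n : ℕ) :
    (2 * n + 3) * ∫ x in -R..R, (R ^ 2 - x ^ 2) ^ (n + 1) =
      (2 * n + 2) * R ^ 2 * ∫ x in -R..R, (R ^ 2 - x ^ 2) ^ n := by
  have hderiv : ∀ x, HasDerivAt (fun x => x * (R ^ 2 - x ^ 2) ^ (n + 1))
      ((2 * n + 3) * (R ^ 2 - x ^ 2) ^ (n + 1) - (2 * n + 2) * R ^ 2 * (R ^ 2 - x ^ 2) ^ n) x := by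
    intro x
    refine ((hasDerivAt_id' x).fun_mul
      (((hasDerivAt_pow 2 x).const_sub (R ^ 2)).fun_pow (n + 1))).congr_deriv ?_
    simp only [Nat.add_sub_cancel, Nat.cast_add, Nat.cast_one, Nat.cast_ofNat, pow_succ]
    ring
  have hint := intervalIntegral.integral_eq_sub_of_hasDerivAt (a := -R) (b := R)
    (fun x _ => hderiv x) (by apply Continuous.intervalIntegrable; fun_prop)
  rw [intervalIntegral.integral_sub (by apply Continuous.intervalIntegrable; fun_prop)
    (by apply Continuous.intervalIntegrable; fun_prop), intervalIntegral.integral_const_mul,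
    intervalIntegral.integral_const_mul] at hint
  have hboundary : R * (R ^ 2 - R ^ 2) ^ (n + 1) - -R * (R ^ 2 - (-R) ^ 2) ^ (n + 1) = 0 := by
    simp
  linarith

theorem integral_sq_sub_sq_pow (R : ℝ) (n : ℕ) :
    ∫ x in -R..R, (R ^ 2 - x ^ 2) ^ n =
      2 ^ (2 * n + 1) * (n ! : ℝ) ^ 2 / (2 * n + 1)! * R ^ (2 * n + 1) := by
  induction n with
  | zero => norm_num [two_mul]
  | succ n ih =>
    have hrec := mul_integral_sq_sub_sq_pow_succ R n
    rw [ih] at hrec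
    have h3 : (2 * n + 3 : ℝ) ≠ 0 := by positivity
    rw [← mul_right_inj' h3, hrec, show 2 * (n + 1) + 1 = 2 * n + 1 + 1 + 1 by ring]
    simp only [Nat.factorial_succ, Nat.cast_mul, Nat.cast_succ, pow_succ]
    field_simp
    ring

theorem integral_besselI0_mul_sqrt {β : ℝ} (hβ : β ≠ 0) (R : ℝ) :
    ∫ x in -R..R, besselI0 (β * √(R ^ 2 - x ^ 2)) = 2 * sinh (β * R) / β := by
  set F : ℕ → ℝ → ℝ := fun n x => besselCoeff n * ((β / 2) ^ 2 * (R ^ 2 - x ^ 2)) ^ n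
  have hsq : ∀ x ∈ Set.uIoc (-R) R, 0 ≤ R ^ 2 - x ^ 2 ∧ R ^ 2 - x ^ 2 ≤ R ^ 2 := fun x hx => by
    rcases Set.mem_uIcc.1 (Set.uIoc_subset_uIcc hx) with h | h <;> constructor <;> nlinarith
  have hterm : ∀ n, ∫ x in -R..R, F n x = 2 / β * ((β * R) ^ (2 * n + 1) / (2 * n + 1)!) := by
    intro n
    simp only [F, mul_pow, div_pow, intervalIntegral.integral_const_mul, integral_sq_sub_sq_pow,
      besselCoeff, pow_succ _ (2 * n), pow_mul]
    have : (n ! : ℝ) ≠ 0 := by positivity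
    field_simp
  have hsum : HasSum (fun n => ∫ x in -R..R, F n x)
      (∫ x in -R..R, besselI0 (β * √(R ^ 2 - x ^ 2))) := by
    refine intervalIntegral.hasSum_integral_of_dominated_convergence
      (fun n _ => besselCoeff n * ((β / 2) ^ 2 * R ^ 2) ^ n)
      (fun n => (by fun_prop : Continuous (F n)).aestronglyMeasurable) (fun n => ?_)
      (.of_forall fun _ _ => isEntireCoeff_besselCoeff.summable _) intervalIntegrable_const
      (.of_forall fun x hx => ?_)
    · refine .of_forall fun x hx => ?_
      obtain ⟨h0, hR⟩ := hsq x hx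
      rw [Real.norm_of_nonneg (by simp only [F, besselCoeff]; positivity)]
      simp only [F, besselCoeff]
      gcongr
    · rw [besselI0_mul_sqrt (hsq x hx).1]
      exact (isEntireCoeff_besselCoeff.summable _).hasSum
  have hsinh : HasSum (fun n => ∫ x in -R..R, F n x) (2 / β * sinh (β * R)) := by
    simpa only [hterm] using (hasSum_sinh (β * R)).mul_left (2 / β)
  rw [hsum.unique hsinh]
  ring

section Quadratic

variable {G G' G'' : ℝ → ℝ} {α β : ℝ} {q : ℝ → ℝ}

theorem hasDerivAt_comp_quadratic (hG : ∀ u, HasDerivAt G (G' u) u)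
    (hq : ∀ r, q r = α * r ^ 2 + β) (r : ℝ) :
    HasDerivAt (fun r => G (q r)) (G' (q r) * (2 * α * r)) r := by
  have hq' : HasDerivAt q (2 * α * r) r := by
    rw [show q = fun r => α * r ^ 2 + β from funext hq]
    exact (((hasDerivAt_pow 2 r).const_mul α).add_const β).congr_deriv (by ring)
  exact (hG (q r)).comp r hq'

theorem deriv_deriv_comp_quadratic (hG : ∀ u, HasDerivAt G (G' u) u)
    (hG' : ∀ u, HasDerivAt G' (G'' u) u) (hq : ∀ r, q r = α * r ^ 2 + β) (r : ℝ) :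
    deriv (deriv fun r => G (q r)) r = G'' (q r) * (2 * α * r) ^ 2 + 2 * α * G' (q r) := by
  rw [funext fun r => (hasDerivAt_comp_quadratic hG hq r).deriv]
  refine (((hasDerivAt_comp_quadratic hG' hq r).mul
    ((hasDerivAt_id' r).const_mul (2 * α))).congr_deriv ?_).deriv
  ring

end Quadratic

theorem deriv_deriv_sub_deriv_deriv_of_ode {G G' G'' : ℝ → ℝ} (hG : ∀ u, HasDerivAt G (G' u) u)
    (hG' : ∀ u, HasDerivAt G' (G'' u) u) (hode : ∀ u, u * G'' u + G' u = G u) (a c x t : ℝ) :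
    deriv (deriv fun r => G (a * (c ^ 2 * r ^ 2 - x ^ 2))) t
      - c ^ 2 * deriv (deriv fun s => G (a * (c ^ 2 * t ^ 2 - s ^ 2))) x
      = 4 * a * c ^ 2 * G (a * (c ^ 2 * t ^ 2 - x ^ 2)) := by
  rw [deriv_deriv_comp_quadratic hG hG' (α := a * c ^ 2) (β := -(a * x ^ 2)) (fun r => by ring),
    deriv_deriv_comp_quadratic hG hG' (α := -a) (β := a * c ^ 2 * t ^ 2) (fun s => by ring)]
  linear_combination 4 * a * c ^ 2 * hode (a * (c ^ 2 * t ^ 2 - x ^ 2))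

theorem deriv_deriv_div_sinh_add {f : ℝ → ℝ} (hf : ContDiff ℝ 2 f) {lam t : ℝ} (hlam : lam ≠ 0)
    (ht : t ≠ 0) :
    deriv (deriv fun r => f r / sinh (lam * r)) t
      + 2 * lam * (cosh (lam * t) / sinh (lam * t)) * deriv (fun r => f r / sinh (lam * r)) t
      = (deriv (deriv f) t - lam ^ 2 * f t) / sinh (lam * t) := by
  have hf₁ := hf.differentiable two_ne_zero
  have hf₂ := hf.differentiable_deriv_two
  have hsinh : ∀ r, HasDerivAt (fun r => sinh (lam * r)) (lam * cosh (lam * r)) r := fun r =>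
    ((hasDerivAt_sinh _).comp r ((hasDerivAt_id' r).const_mul lam)).congr_deriv (by ring)
  have hcosh : ∀ r, HasDerivAt (fun r => lam * cosh (lam * r)) (lam ^ 2 * sinh (lam * r)) r :=
    fun r => (((hasDerivAt_cosh _).comp r ((hasDerivAt_id' r).const_mul lam)).const_mul lam
      ).congr_deriv (by ring)
  have hsinh_ne : ∀ r, r ≠ 0 → sinh (lam * r) ≠ 0 := fun r hr =>
    sinh_ne_zero.2 (mul_ne_zero hlam hr)
  set q' := fun r =>
    (deriv f r * sinh (lam * r) - f r * (lam * cosh (lam * r))) / sinh (lam * r) ^ 2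
  have hq : ∀ r, r ≠ 0 → HasDerivAt (fun r => f r / sinh (lam * r)) (q' r) r := fun r hr =>
    (hf₁ r).hasDerivAt.div (hsinh r) (hsinh_ne r hr)
  have hq' : HasDerivAt q' _ t := (((hf₂ t).hasDerivAt.fun_mul (hsinh t)).sub
    ((hf₁ t).hasDerivAt.fun_mul (hcosh t))).div ((hsinh t).fun_pow 2)
    (pow_ne_zero 2 (hsinh_ne t ht))
  have hderiv : deriv (fun r => f r / sinh (lam * r)) =ᶠ[𝓝 t] q' :=
    (eventually_ne_nhds ht).mono fun r hr => (hq r hr).deriv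
  rw [hderiv.deriv_eq, hq'.deriv, (hq t ht).deriv]
  have := hsinh_ne t ht
  simp only [q', Pi.sub_apply]
  field_simp
  ring

noncomputable def telegraphDensity (c lam x t : ℝ) : ℝ :=
  lam / (2 * c) * besselI0 (lam / c * √(c ^ 2 * t ^ 2 - x ^ 2)) / sinh (lam * t)

theorem telegraphDensity_eq_of_sq_le {c lam x t : ℝ} (h : x ^ 2 ≤ c ^ 2 * t ^ 2) :
    telegraphDensity c lam x t =
      lam / (2 * c) * entireSum besselCoeff ((lam / c / 2) ^ 2 * (c ^ 2 * t ^ 2 - x ^ 2))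
        / sinh (lam * t) := by
  rw [telegraphDensity, besselI0_mul_sqrt (sub_nonneg.2 h)]

theorem telegraphDensity_pde {c lam x t : ℝ} (hlam : lam ≠ 0) (hxt : x ^ 2 < c ^ 2 * t ^ 2) :
    deriv (fun r => deriv (fun r' => telegraphDensity c lam x r') r) t
      + 2 * lam * (cosh (lam * t) / sinh (lam * t))
        * deriv (fun r => telegraphDensity c lam x r) t
      = c ^ 2 * deriv (fun s => deriv (fun s' => telegraphDensity c lam s' t) s) x := by
  have hc : c ≠ 0 := by rintro rfl; nlinarith [sq_nonneg x]
  have ht : t ≠ 0 := by rintro rfl; nlinarith [sq_nonneg x]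
  set a := (lam / c / 2) ^ 2
  have hG := isEntireCoeff_besselCoeff.hasDerivAt_entireSum
  have hG' := isEntireCoeff_besselCoeff.derivCoeff.hasDerivAt_entireSum
  have hG₂ : ContDiff ℝ 2 (entireSum besselCoeff) :=
    isEntireCoeff_besselCoeff.contDiff_entireSum.of_le (by norm_cast)
  have hev_t : (fun r => telegraphDensity c lam x r) =ᶠ[𝓝 t] fun r =>
      lam / (2 * c) * entireSum besselCoeff (a * (c ^ 2 * r ^ 2 - x ^ 2)) / sinh (lam * r) :=
    (continuousAt_const.eventually_lt (g := fun r => c ^ 2 * r ^ 2) (by fun_prop) hxt).mono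
      fun r hr => telegraphDensity_eq_of_sq_le hr.le
  have hev_x : (fun s => telegraphDensity c lam s t) =ᶠ[𝓝 x] fun s =>
      lam / (2 * c) / sinh (lam * t) * entireSum besselCoeff (a * (c ^ 2 * t ^ 2 - s ^ 2)) :=
    ((continuousAt_id.pow 2).eventually_lt (g := fun _ => c ^ 2 * t ^ 2) continuousAt_const
      hxt).mono fun s hs => (telegraphDensity_eq_of_sq_le hs.le).trans (mul_div_right_comm _ _ _)
  rw [hev_t.deriv.deriv_eq, hev_t.deriv_eq, hev_x.deriv.deriv_eq,
    deriv_deriv_div_sinh_add (by fun_prop) hlam ht]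
  simp only [deriv_const_mul_field']
  have hkg := deriv_deriv_sub_deriv_deriv_of_ode hG hG' entireSum_besselCoeff_ode a c x t
  have ha : 4 * a * c ^ 2 = lam ^ 2 := by simp only [a]; field_simp; ring
  linear_combination (lam / (2 * c) / sinh (lam * t)) * hkg
    + (lam / (2 * c) / sinh (lam * t) * entireSum besselCoeff (a * (c ^ 2 * t ^ 2 - x ^ 2))) * ha

theorem integral_telegraphDensity {c lam t : ℝ} (hct : 0 < c * t) (hlam : lam ≠ 0) :
    ∫ x in Set.Ioo (-(c * t)) (c * t), telegraphDensity c lam x t = 1 := by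
  have hc : c ≠ 0 := by rintro rfl; simp at hct
  have hsinh : sinh (lam * t) ≠ 0 := sinh_ne_zero.2 (mul_ne_zero hlam (by rintro rfl; simp at hct))
  rw [← integral_Ioc_eq_integral_Ioo, ← intervalIntegral.integral_of_le (by linarith)]
  simp only [telegraphDensity, intervalIntegral.integral_div, intervalIntegral.integral_const_mul,
    ← mul_pow c t, integral_besselI0_mul_sqrt (div_ne_zero hlam hc)]
  field_simp

/-- `p(x,t) = (λ/(2c)) I₀((λ/c)√(c²t²-x²))/sinh(λt)` solves the telegraph
equation with rate `λ coth(λt)` and integrates to 1 on `(-ct, ct)`. -/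
theorem coth_telegraph_density (c lam : ℝ) (hc : 0 < c) (hlam : 0 < lam)
    (p : ℝ → ℝ → ℝ)
    (hp : ∀ x t, p x t =
      lam / (2 * c) * besselI0 (lam / c * Real.sqrt (c ^ 2 * t ^ 2 - x ^ 2))
        / Real.sinh (lam * t)) :
    (∀ x t : ℝ, 0 < t → |x| < c * t →
      deriv (fun r => deriv (fun r' => p x r') r) t
        + 2 * lam * (Real.cosh (lam * t) / Real.sinh (lam * t)) * deriv (fun r => p x r) t
        = c ^ 2 * deriv (fun s => deriv (fun s' => p s' t) s) x) ∧
    (∀ t : ℝ, 0 < t → ∫ x in Set.Ioo (-(c * t)) (c * t), p x t = 1) := by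
  obtain rfl : p = telegraphDensity c lam := funext fun x => funext (hp x)
  refine ⟨fun x t _ hx => telegraphDensity_pde hlam.ne' ?_, fun t ht =>
    integral_telegraphDensity (mul_pos hc ht) hlam.ne'⟩
  simpa only [sq_abs, mul_pow] using pow_lt_pow_left₀ hx (abs_nonneg x) two_ne_zero
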